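/- Let O be a finite arena whose coloring assigns to each vertex v a pair Γ(v) = (p(v), weight(v)) ∈ ℕ × ℤ of a priority and a weight, and let E_max ∈ ℕ. Consider the spill-over-like energy parity condition W = {ρ : the maximal priority occurring infinitely often in ρ is even, and for all n, 0 ≤ Σ_{i<n} weight(ρ(i)) ≤ E_max}, and the battery-like energy parity condition W' = {ρ : the maximal priority occurring infinitely often in ρ is even, and for all n, e_n + weight(ρ(n)) ≥ 0, where e_0 = 0 and e_{n+1} = min(e_n + weight(ρ(n)), E_max)}. Then for each of the games (O, W) and (O, W') and every vertex v₀, one of the two players has a winning strategy from (ε, v₀), and that player has a finite-memory winning strategy from (ε, v₀) of size at most E_max + 2. -/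

import Mathlib

/-! Common framework: arenas, strategies, plays, winning, finite memory, (h)SPE. -/

structure Arena (V C : Type) where
  V1 : Set V
  V2 : Set V
  E : Set (V × V)
  Γ : V → C

namespace Arena

variable {V C : Type}

/-- The vertex set of an arena. -/
def vertices (O : Arena V C) : Set V := O.V1 ∪ O.V2

/-- Well-formedness of an arena: the two players' vertex sets are disjoint, edges stay
within the vertex set, and every vertex has at least one outgoing edge. -/
def WF (O : Arena V C) : Prop :=
  Disjoint O.V1 O.V2 ∧ (∀ e ∈ O.E, e.1 ∈ O.vertices ∧ e.2 ∈ O.vertices) ∧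
    ∀ v ∈ O.vertices, ∃ u, (v, u) ∈ O.E

/-- Restriction of an arena to a subset `S` of the vertices. -/
def restrict (O : Arena V C) (S : Set V) : Arena V C :=
  ⟨O.V1 ∩ S, O.V2 ∩ S, O.E ∩ S ×ˢ S, O.Γ⟩

/-- Product of an arena with a DFA over the colors. -/
def prodDFA {Q : Type} (O : Arena V C) (A : DFA C Q) : Arena (V × Q) C :=
  ⟨O.V1 ×ˢ (Set.univ : Set Q), O.V2 ×ˢ (Set.univ : Set Q),
    {p : (V × Q) × V × Q | (p.1.1, p.2.1) ∈ O.E ∧ p.2.2 = A.step p.1.2 (O.Γ p.1.1)},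
    fun vq => O.Γ vq.1⟩

/-- A strategy (for Player 1) is valid if it follows edges on Player 1's vertices. -/
def Valid1 (O : Arena V C) (σ : List C → V → V) : Prop :=
  ∀ (w : List C), ∀ v ∈ O.V1, (v, σ w v) ∈ O.E

/-- A strategy (for Player 2) is valid if it follows edges on Player 2's vertices. -/
def Valid2 (O : Arena V C) (σ : List C → V → V) : Prop :=
  ∀ (w : List C), ∀ v ∈ O.V2, (v, σ w v) ∈ O.E

open Classical in
/-- The combination σ₁ ∪ σ₂ of a strategy profile into one function. -/
noncomputable def combine (O : Arena V C) (σ1 σ2 : List C → V → V) : List C → V → V :=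
  fun w v => if v ∈ O.V1 then σ1 w v else σ2 w v

/-- The sequence of (history, current vertex) pairs generated by a profile from `(w, v)`. -/
def stepSeq (O : Arena V C) (σ : List C → V → V) (w : List C) (v : V) : ℕ → List C × V
  | 0 => (w, v)
  | k + 1 =>
    let p := stepSeq O σ w v k
    (p.1 ++ [O.Γ p.2], σ p.1 p.2)

/-- The play `Σ_σ(w, v)` induced by a (combined) strategy profile `σ` from `(w, v)`:
its first `|w|` letters are `w`, then it continues with the colors of the visited vertices. -/
def play (O : Arena V C) (σ : List C → V → V) (w : List C) (v : V) : ℕ → C :=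
  fun i => if h : i < w.length then w.get ⟨i, h⟩
    else O.Γ (stepSeq O σ w v (i - w.length)).2

/-- `σ1` is a winning strategy of Player 1 from `(w, v)` for winning condition `W`. -/
def Winning1 (O : Arena V C) (W : Set (ℕ → C)) (σ1 : List C → V → V)
    (w : List C) (v : V) : Prop :=
  ∀ σ2, O.Valid2 σ2 → O.play (O.combine σ1 σ2) w v ∈ W

/-- `σ2` is a winning strategy of Player 2 from `(w, v)` for winning condition `W`. -/
def Winning2 (O : Arena V C) (W : Set (ℕ → C)) (σ2 : List C → V → V)
    (w : List C) (v : V) : Prop :=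
  ∀ σ1, O.Valid1 σ1 → O.play (O.combine σ1 σ2) w v ∉ W

/-- Player 1 has a winning strategy from `(w, v)`. -/
def Wins1From (O : Arena V C) (W : Set (ℕ → C)) (w : List C) (v : V) : Prop :=
  ∃ σ1, O.Valid1 σ1 ∧ O.Winning1 W σ1 w v

/-- Player 2 has a winning strategy from `(w, v)`. -/
def Wins2From (O : Arena V C) (W : Set (ℕ → C)) (w : List C) (v : V) : Prop :=
  ∃ σ2, O.Valid2 σ2 ∧ O.Winning2 W σ2 w v

/-- A strategy (of the player owning the vertices `Vi`) is finite-memory: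
it is computed by a Moore machine with finitely many states. -/
def IsFM (Vi : Set V) (σ : List C → V → V) : Prop :=
  ∃ (M : Type) (_ : Fintype M) (m0 : M) (αu : M → C → M) (αn : M → V → V),
    ∀ (w : List C), ∀ v ∈ Vi, σ w v = αn (w.foldl αu m0) v

/-- Finite-memory of size at most `k`. -/
def IsFMSize (Vi : Set V) (σ : List C → V → V) (k : ℕ) : Prop :=
  ∃ (M : Type) (inst : Fintype M), @Fintype.card M inst ≤ k ∧
    ∃ (m0 : M) (αu : M → C → M) (αn : M → V → V),
      ∀ (w : List C), ∀ v ∈ Vi, σ w v = αn (w.foldl αu m0) v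

/-- The hSPE conditions for the profile `(σ1, σ2)` at `(w, v)`. -/
def hSPEAt (O : Arena V C) (W : Set (ℕ → C)) (σ1 σ2 : List C → V → V)
    (w : List C) (v : V) : Prop :=
  (O.play (O.combine σ1 σ2) w v ∈ W →
    ∀ σ2', O.Valid2 σ2' → O.play (O.combine σ1 σ2') w v ∈ W) ∧
  (O.play (O.combine σ1 σ2) w v ∉ W →
    ∀ σ1', O.Valid1 σ1' → O.play (O.combine σ1' σ2) w v ∉ W)

/-- Hypothetical subgame-perfect equilibrium: hSPE conditions at every `(w, v) ∈ C^* × V`. -/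
def IsHSPE (O : Arena V C) (W : Set (ℕ → C)) (σ1 σ2 : List C → V → V) : Prop :=
  O.Valid1 σ1 ∧ O.Valid2 σ2 ∧ ∀ (w : List C), ∀ v ∈ O.vertices, O.hSPEAt W σ1 σ2 w v

/-- Histories realizable in the arena: `w` is the color sequence of a path ending at `v`. -/
inductive Hist (O : Arena V C) : List C → V → Prop
  | base (v : V) (hv : v ∈ O.vertices) : Hist O [] v
  | step {w : List C} {v : V} (h : Hist O w v) {v' : V} (he : (v, v') ∈ O.E) :
      Hist O (w ++ [O.Γ v]) v'

/-- Subgame-perfect equilibrium: hSPE conditions at every realizable `(w, v)`. -/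
def IsSPE (O : Arena V C) (W : Set (ℕ → C)) (σ1 σ2 : List C → V → V) : Prop :=
  O.Valid1 σ1 ∧ O.Valid2 σ2 ∧ ∀ (w : List C) (v : V), O.Hist w v → O.hSPEAt W σ1 σ2 w v

/-- A game is regularly-predictable if for each vertex `v` a finite automaton recognizes
the histories from which Player 1 has a winning strategy at `v`. -/
def RegularlyPredictable (O : Arena V C) (W : Set (ℕ → C)) : Prop :=
  ∀ v ∈ O.vertices, ∃ (Q : Type) (_ : Fintype Q) (A : DFA C Q),
    ∀ w : List C, w ∈ A.accepts ↔ O.Wins1From W w v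

/-- The game has a finite-memory hSPE. -/
def HasFMhSPE (O : Arena V C) (W : Set (ℕ → C)) : Prop :=
  ∃ σ1 σ2, O.IsHSPE W σ1 σ2 ∧ IsFM O.V1 σ1 ∧ IsFM O.V2 σ2

/-- The game has a finite-memory SPE. -/
def HasFMSPE (O : Arena V C) (W : Set (ℕ → C)) : Prop :=
  ∃ σ1 σ2, O.IsSPE W σ1 σ2 ∧ IsFM O.V1 σ1 ∧ IsFM O.V2 σ2

end Arena

/-- The prefix of length `n` of an infinite sequence of colors. -/
def seqPrefix {C : Type} (ρ : ℕ → C) (n : ℕ) : List C := (List.range n).map ρ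

/-- A language is regular if it is accepted by a DFA with a finite state set. -/
def IsRegularLang {C : Type} (L : Set (List C)) : Prop :=
  ∃ (Q : Type) (_ : Fintype Q) (A : DFA C Q), ∀ w : List C, w ∈ A.accepts ↔ w ∈ L

/-- `Rl 𝒲 l`: winning conditions obtained as a Boolean combination of members of `𝒲`
and of `l` conditions `Pref(ρ) ∩ Lⱼ = ∅` with the `Lⱼ` regular. -/
def Rl {C : Type} (𝒲 : Set (Set (ℕ → C))) (l : ℕ) : Set (Set (ℕ → C)) :=
  { W' | ∃ (k : ℕ) (φ : (Fin k → Prop) → (Fin l → Prop) → Prop)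
      (Ws : Fin k → Set (ℕ → C)) (Ls : Fin l → Set (List C)),
      (∀ i, Ws i ∈ 𝒲) ∧ (∀ j, IsRegularLang (Ls j)) ∧
      W' = {ρ | φ (fun i => ρ ∈ Ws i) (fun j => ∀ n : ℕ, seqPrefix ρ n ∉ Ls j)} }

/-- Prepending a color to an infinite sequence. -/
def consSeq {C : Type} (c : C) (ρ : ℕ → C) : ℕ → C
  | 0 => c
  | n + 1 => ρ n

/-- The battery-like energy level sequence: `e 0 = 0`, `e (k+1) = min (e k + d k) b`. -/
def batteryLevel (d : ℕ → ℤ) (b : ℤ) : ℕ → ℤ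
  | 0 => 0
  | k + 1 => min (batteryLevel d b k + d k) b

/-- The priority `d` occurs infinitely often among the first components of `ρ`. -/
def InfOften (ρ : ℕ → ℕ × ℤ) (d : ℕ) : Prop := ∀ N : ℕ, ∃ k ≥ N, (ρ k).1 = d

/-- The parity condition: the maximal priority occurring infinitely often is even. -/
def ParityCond (ρ : ℕ → ℕ × ℤ) : Prop :=
  ∃ d : ℕ, Even d ∧ InfOften ρ d ∧ ∀ d' : ℕ, InfOften ρ d' → d' ≤ d

/-- The spill-over-like energy parity condition. -/
def spillW (Emax : ℕ) : Set (ℕ → ℕ × ℤ) :=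
  {ρ | ParityCond ρ ∧ ∀ n : ℕ,
    0 ≤ (∑ i ∈ Finset.range n, (ρ i).2) ∧ (∑ i ∈ Finset.range n, (ρ i).2) ≤ (Emax : ℤ)}

/-- The battery-like energy parity condition. -/
def battW (Emax : ℕ) : Set (ℕ → ℕ × ℤ) :=
  {ρ | ParityCond ρ ∧ ∀ n : ℕ,
    0 ≤ batteryLevel (fun i => (ρ i).2) (Emax : ℤ) n + (ρ n).2}

namespace ZK
open Classical
attribute [local instance 10] Classical.propDecidable
set_option linter.unusedSectionVars false

variable {S : Type} [Fintype S] [DecidableEq S]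

section
variable (own : S → Bool) (R : S → S → Prop) (π : S → ℕ)

def InfO (f : ℕ → S) (d : ℕ) : Prop := ∀ N, ∃ k ≥ N, π (f k) = d

def Good (f : ℕ → S) : Prop := ∃ d, Even d ∧ InfO π f d ∧ ∀ d', InfO π f d' → d' ≤ d

def Play (p : Bool) (s : S → S) (U : Finset S) (f : ℕ → S) : Prop :=
  (∀ n, f n ∈ U) ∧ ∀ n, (own (f n) = p → f (n+1) = s (f n)) ∧ (own (f n) ≠ p → R (f n) (f (n+1)))

def ValidS (p : Bool) (s : S → S) (U : Finset S) : Prop :=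
  ∀ v ∈ U, own v = p → s v ∈ U ∧ R v (s v)

def Closed (p : Bool) (s : S → S) (W U : Finset S) : Prop :=
  ∀ v ∈ W, (own v = p → s v ∈ W) ∧ (own v ≠ p → ∀ u ∈ U, R v u → u ∈ W)

def WinsAll (p : Bool) (s : S → S) (U W : Finset S) : Prop :=
  ∀ v ∈ W, ∀ f, f 0 = v → Play own R p s U f → (Good π f ↔ p = true)

noncomputable def astep (p : Bool) (U X : Finset S) : Finset S :=
  X ∪ U.filter (fun v => (own v = p ∧ ∃ u ∈ X, R v u) ∨ (own v ≠ p ∧ ∀ u ∈ U, R v u → u ∈ X))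

noncomputable def attr (p : Bool) (U A : Finset S) : Finset S :=
  (astep own R p U)^[Fintype.card S + 1] A

lemma subset_astep (p : Bool) (U X : Finset S) : X ⊆ astep own R p U X :=
  Finset.subset_union_left

lemma iter_subset_succ (p : Bool) (U A : Finset S) (k : ℕ) :
    (astep own R p U)^[k] A ⊆ (astep own R p U)^[k+1] A := by
  rw [Function.iterate_succ_apply']
  exact subset_astep own R p U _

lemma iter_subset (p : Bool) (U A : Finset S) {a b : ℕ} (h : a ≤ b) :
    (astep own R p U)^[a] A ⊆ (astep own R p U)^[b] A := by
  induction b with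
  | zero => simp_all
  | succ b ih =>
    rcases Nat.lt_or_ge a (b+1) with h' | h'
    · exact (ih (by omega)).trans (iter_subset_succ own R p U A b)
    · have : a = b + 1 := by omega
      subst this; rfl

lemma iter_fix (g : Finset S → Finset S) (hg : ∀ X, X ⊆ g X) (A : Finset S) :
    g (g^[Fintype.card S + 1] A) = g^[Fintype.card S + 1] A := by
  by_cases h : ∃ k ≤ Fintype.card S, g (g^[k] A) = g^[k] A
  · obtain ⟨k, hk, hfix⟩ := h
    have step : ∀ m, k ≤ m → g^[m] A = g^[k] A := by
      intro m hm
      induction m with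
      | zero =>
        have : k = 0 := by omega
        subst this; rfl
      | succ m ih =>
        rcases Nat.lt_or_ge k (m+1) with h' | h'
        · have := ih (by omega)
          rw [Function.iterate_succ_apply', this]; exact hfix
        · have : k = m + 1 := by omega
          subst this; rfl
    rw [step (Fintype.card S + 1) (by omega)]; exact hfix
  · push_neg at h
    exfalso
    have grow : ∀ k, k ≤ Fintype.card S + 1 → k ≤ (g^[k] A).card := by
      intro k hk
      induction k with
      | zero => omega
      | succ k ih =>
        have h1 : g^[k] A ⊂ g (g^[k] A) :=
          lt_of_le_of_ne (hg _) (fun e => h k (by omega) e.symm)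
        have h2 := Finset.card_lt_card h1
        rw [Function.iterate_succ_apply']
        have := ih (by omega)
        omega
    have h1 := grow (Fintype.card S + 1) le_rfl
    have h2 : (g^[Fintype.card S + 1] A).card ≤ Fintype.card S := Finset.card_le_univ _
    omega

lemma attr_fixed (p : Bool) (U A : Finset S) :
    astep own R p U (attr own R p U A) = attr own R p U A :=
  iter_fix _ (subset_astep own R p U) A

lemma subset_attr (p : Bool) (U A : Finset S) : A ⊆ attr own R p U A :=
  iter_subset own R p U A (Nat.zero_le _)

lemma attr_subset (p : Bool) (U A : Finset S) (hA : A ⊆ U) : attr own R p U A ⊆ U := by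
  have : ∀ k, (astep own R p U)^[k] A ⊆ U := by
    intro k
    induction k with
    | zero => exact hA
    | succ k ih =>
      rw [Function.iterate_succ_apply']
      exact Finset.union_subset ih (Finset.filter_subset _ _)
  exact this _

/-- the rank of a vertex in the attractor -/
noncomputable def rk (p : Bool) (U A : Finset S) (v : S) : ℕ :=
  sInf {k | v ∈ (astep own R p U)^[k] A}

lemma rk_spec (p : Bool) (U A : Finset S) {v : S} (hv : v ∈ attr own R p U A) :
    v ∈ (astep own R p U)^[rk own R p U A v] A := by
  have h : rk own R p U A v ∈ {k | v ∈ (astep own R p U)^[k] A} :=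
    Nat.sInf_mem ⟨Fintype.card S + 1, hv⟩
  exact h

lemma rk_min (p : Bool) (U A : Finset S) {v : S} {k : ℕ} (h : k < rk own R p U A v) :
    v ∉ (astep own R p U)^[k] A :=
  Nat.notMem_of_lt_sInf h

lemma rk_le (p : Bool) (U A : Finset S) {v : S} (hv : v ∈ attr own R p U A) :
    rk own R p U A v ≤ Fintype.card S + 1 :=
  Nat.sInf_le hv

lemma rk_pos (p : Bool) (U A : Finset S) {v : S} (hv : v ∈ attr own R p U A) (hvA : v ∉ A) :
    1 ≤ rk own R p U A v := by
  by_contra h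
  have h0 : rk own R p U A v = 0 := by omega
  have h1 := rk_spec own R p U A hv
  rw [h0] at h1
  exact hvA (by simpa using h1)

/-- decompose a non-base attractor element -/
lemma attr_decomp (p : Bool) (U A : Finset S) {v : S} (hv : v ∈ attr own R p U A)
    (hvA : v ∉ A) :
    v ∈ U ∧
    ((own v = p ∧ ∃ u ∈ (astep own R p U)^[rk own R p U A v - 1] A, R v u) ∨
     (own v ≠ p ∧ ∀ u ∈ U, R v u → u ∈ (astep own R p U)^[rk own R p U A v - 1] A)) := by
  have h1 := rk_pos own R p U A hv hvA
  have h2 := rk_spec own R p U A hv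
  have h3 := rk_min own R p U A (v := v) (k := rk own R p U A v - 1) (by omega)
  have : rk own R p U A v = (rk own R p U A v - 1) + 1 := by omega
  rw [this, Function.iterate_succ_apply'] at h2
  unfold astep at h2
  rw [Finset.mem_union] at h2
  rcases h2 with h2 | h2
  · exact absurd h2 h3
  · rw [Finset.mem_filter] at h2
    exact ⟨h2.1, h2.2⟩

lemma iter_subset_attr (p : Bool) (U A : Finset S) {v : S} {k : ℕ}
    (h : v ∈ (astep own R p U)^[k] A) : v ∈ attr own R p U A := by
  rcases le_or_gt k (Fintype.card S + 1) with hk | hk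
  · exact iter_subset own R p U A hk h
  · -- iterate beyond the fixpoint is the fixpoint
    have fix : ∀ m, (astep own R p U)^[Fintype.card S + 1 + m] A = attr own R p U A := by
      intro m
      induction m with
      | zero => rfl
      | succ m ih =>
        have : Fintype.card S + 1 + (m+1) = (Fintype.card S + 1 + m) + 1 := by omega
        rw [this, Function.iterate_succ_apply', ih, attr_fixed]
    have : v ∈ (astep own R p U)^[Fintype.card S + 1 + (k - (Fintype.card S + 1))] A := by
      have : Fintype.card S + 1 + (k - (Fintype.card S + 1)) = k := by omega
      rw [this]; exact h
    rw [fix] at this; exact this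

lemma attr_escape (p : Bool) (U A : Finset S) {v : S} (hv : v ∈ U)
    (h : v ∉ attr own R p U A) :
    (own v = p → ∀ u, R v u → u ∉ attr own R p U A) ∧
    (own v ≠ p → ∃ u ∈ U, R v u ∧ u ∉ attr own R p U A) := by
  have h2 : v ∉ astep own R p U (attr own R p U A) := by rw [attr_fixed]; exact h
  unfold astep at h2
  rw [Finset.mem_union, Finset.mem_filter] at h2
  push_neg at h2
  have h3 := h2.2 hv
  constructor
  · intro hp u hru hu
    exact h3.1 hp u hu hru
  · intro hnp
    have := h3.2 hnp
    obtain ⟨u, hu, hru, hnu⟩ := this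
    exact ⟨u, hu, hru, hnu⟩


/-- existence of an attractor strategy -/
lemma attr_strategy (p : Bool) (U A : Finset S) :
    ∃ χ : S → S, ∀ v, v ∈ attr own R p U A → v ∉ A → own v = p →
      R v (χ v) ∧ χ v ∈ (astep own R p U)^[rk own R p U A v - 1] A := by
  have key : ∀ v : S, ∃ u : S, v ∈ attr own R p U A → v ∉ A → own v = p →
      R v u ∧ u ∈ (astep own R p U)^[rk own R p U A v - 1] A := by
    intro v
    by_cases h : v ∈ attr own R p U A ∧ v ∉ A ∧ own v = p
    · obtain ⟨hv, hvA, hp⟩ := h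
      have := (attr_decomp own R p U A hv hvA).2
      rcases this with ⟨_, u, hu, hru⟩ | ⟨hnp, _⟩
      · exact ⟨u, fun _ _ _ => ⟨hru, hu⟩⟩
      · exact absurd hp hnp
    · exact ⟨v, fun h1 h2 h3 => absurd ⟨h1, h2, h3⟩ h⟩
  choose χ hχ using key
  exact ⟨χ, fun v h1 h2 h3 => hχ v h1 h2 h3⟩

/-- attractor reach lemma: any consistent play entering the attractor reaches the target -/
lemma attr_reach (p : Bool) (U A : Finset S) (s : S → S)
    (hs : ∀ v, v ∈ attr own R p U A → v ∉ A → own v = p →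
      s v ∈ (astep own R p U)^[rk own R p U A v - 1] A)
    (f : ℕ → S) (hf : Play own R p s U f) :
    ∀ n, f n ∈ attr own R p U A → ∃ m, n ≤ m ∧ f m ∈ A := by
  suffices H : ∀ K n, rk own R p U A (f n) ≤ K → f n ∈ attr own R p U A →
      ∃ m, n ≤ m ∧ f m ∈ A by
    intro n hn
    exact H (rk own R p U A (f n)) n le_rfl hn
  intro K
  induction K with
  | zero =>
    intro n h0 hn
    by_cases hA : f n ∈ A
    · exact ⟨n, le_rfl, hA⟩
    · exact absurd (rk_pos own R p U A hn hA) (by omega)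
  | succ K ih =>
    intro n hK hn
    by_cases hA : f n ∈ A
    · exact ⟨n, le_rfl, hA⟩
    · have hnext : f (n+1) ∈ (astep own R p U)^[rk own R p U A (f n) - 1] A := by
        rcases attr_decomp own R p U A hn hA with ⟨hvU, hdec⟩
        by_cases hp : own (f n) = p
        · rw [(hf.2 n).1 hp]
          exact hs _ hn hA hp
        · rcases hdec with ⟨hp', _⟩ | ⟨_, hall⟩
          · exact absurd hp' hp
          · exact hall _ (hf.1 (n+1)) ((hf.2 n).2 hp)
      have hnattr : f (n+1) ∈ attr own R p U A := iter_subset_attr own R p U A hnext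
      have hrklt : rk own R p U A (f (n+1)) ≤ rk own R p U A (f n) - 1 := Nat.sInf_le hnext
      have hrkpos := rk_pos own R p U A hn hA
      obtain ⟨m, hm, hmA⟩ := ih (n+1) (by omega) hnattr
      exact ⟨m, by omega, hmA⟩

lemma attr_opp_step (p : Bool) (U A : Finset S) {v u : S}
    (hv : v ∈ attr own R p U A) (hvA : v ∉ A) (hnp : own v ≠ p)
    (hu : u ∈ U) (hru : R v u) : u ∈ attr own R p U A := by
  rcases attr_decomp own R p U A hv hvA with ⟨_, hdec⟩
  rcases hdec with ⟨hp', _⟩ | ⟨_, hall⟩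
  · exact absurd hp' hnp
  · exact iter_subset_attr own R p U A (hall u hu hru)

lemma infO_shift (f : ℕ → S) (T d : ℕ) :
    InfO π (fun k => f (k + T)) d ↔ InfO π f d := by
  constructor
  · intro h N
    obtain ⟨k, hk, he⟩ := h N
    exact ⟨k + T, by omega, he⟩
  · intro h N
    obtain ⟨k, hk, he⟩ := h (N + T)
    refine ⟨k - T, by omega, ?_⟩
    show π (f (k - T + T)) = d
    have : k - T + T = k := by omega
    rw [this]; exact he

lemma good_shift (f : ℕ → S) (T : ℕ) :
    Good π (fun k => f (k + T)) ↔ Good π f := by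
  unfold Good
  constructor <;> rintro ⟨d, hd, h1, h2⟩
  · exact ⟨d, hd, (infO_shift π f T d).mp h1,
      fun d' hd' => h2 d' ((infO_shift π f T d').mpr hd')⟩
  · exact ⟨d, hd, (infO_shift π f T d).mpr h1,
      fun d' hd' => h2 d' ((infO_shift π f T d').mp hd')⟩

lemma good_iff_even (f : ℕ → S) (d : ℕ) (h1 : InfO π f d)
    (h2 : ∀ d', InfO π f d' → d' ≤ d) : Good π f ↔ Even d := by
  constructor
  · rintro ⟨d'', he, hi, hm⟩
    have : d'' = d := le_antisymm (h2 _ hi) (hm _ h1)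
    rw [← this]; exact he
  · intro he; exact ⟨d, he, h1, h2⟩

lemma play_tail (p : Bool) (s : S → S) (U : Finset S) (f : ℕ → S)
    (hf : Play own R p s U f) (T : ℕ) :
    Play own R p s U (fun k => f (k + T)) := by
  refine ⟨fun n => hf.1 _, fun n => ⟨fun hp => ?_, fun hnp => ?_⟩⟩
  · show f (n + 1 + T) = _
    have : n + 1 + T = (n + T) + 1 := by omega
    rw [this]; exact (hf.2 (n + T)).1 hp
  · show R (f (n + T)) (f (n + 1 + T))
    have : n + 1 + T = (n + T) + 1 := by omega
    rw [this]; exact (hf.2 (n + T)).2 hnp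


lemma bool_union {α : Type} [DecidableEq α] (G : Bool → Finset α) (p : Bool) :
    G p ∪ G (!p) = G true ∪ G false := by
  cases p
  · exact Finset.union_comm _ _
  · rfl

lemma bne_of_ne {a b : Bool} (h : a ≠ b) : a = !b := by
  cases a <;> cases b <;> simp_all

lemma ne_bnot {a p : Bool} (h : a ≠ !p) : a = p := by
  cases a <;> cases p <;> simp_all

theorem zielonka (U : Finset S) :
    (∀ v ∈ U, ∃ u ∈ U, R v u) →
    ∃ (W : Bool → Finset S) (s : Bool → S → S),
      W true ∪ W false = U ∧
      ∀ p : Bool, W p ⊆ U ∧ ValidS own R p (s p) U ∧ Closed own R p (s p) (W p) U ∧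
        WinsAll own R π p (s p) U (W p) := by
  induction U using Finset.strongInductionOn with
  | _ U IH =>
  intro hTot
  rcases U.eq_empty_or_nonempty with hUe | hUne
  · subst hUe
    refine ⟨fun _ => ∅, fun _ => id, by simp, fun p => ⟨by simp, ?_, ?_, ?_⟩⟩
    · intro v hv; simp at hv
    · intro v hv; simp at hv
    · intro v hv; simp at hv
  -- default strategy
  obtain ⟨dflt, hdfltU, hdfltR⟩ : ∃ dflt : S → S, (∀ v ∈ U, dflt v ∈ U) ∧ ∀ v ∈ U, R v (dflt v) := by
    choose! dflt h1 h2 using hTot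
    exact ⟨dflt, h1, h2⟩
  have hValidDflt : ∀ r : Bool, ValidS own R r dflt U :=
    fun r v hv _ => ⟨hdfltU v hv, hdfltR v hv⟩
  -- maximal priority
  set d := (U.image π).max' (hUne.image π) with hd
  have hπle : ∀ v ∈ U, π v ≤ d := fun v hv =>
    Finset.le_max' _ _ (Finset.mem_image_of_mem π hv)
  set N := U.filter (fun v => π v = d) with hN
  have hNne : N.Nonempty := by
    obtain ⟨v, hv, hπv⟩ := Finset.mem_image.mp ((U.image π).max'_mem (hUne.image π))
    exact ⟨v, Finset.mem_filter.mpr ⟨hv, hπv⟩⟩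
  have hNU : N ⊆ U := Finset.filter_subset _ _
  set p := decide (Even d) with hp
  set A := attr own R p U N with hA
  have hNA : N ⊆ A := subset_attr own R p U N
  have hAU : A ⊆ U := attr_subset own R p U N hNU
  set U₁ := U \ A with hU₁
  have hU₁U : U₁ ⊆ U := Finset.sdiff_subset
  have hU₁ss : U₁ ⊂ U := Finset.sdiff_ssubset hAU (hNne.mono hNA)
  -- p-trap property of U₁
  have trap1 : ∀ v ∈ U₁, own v = p → ∀ u ∈ U, R v u → u ∈ U₁ := by
    intro v hv hop u hu hru
    rw [Finset.mem_sdiff] at hv ⊢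
    exact ⟨hu, (attr_escape own R p U N hv.1 hv.2).1 hop u hru⟩
  have hTot₁ : ∀ v ∈ U₁, ∃ u ∈ U₁, R v u := by
    intro v hv
    have hv' := Finset.mem_sdiff.mp hv
    by_cases hop : own v = p
    · obtain ⟨u, hu, hru⟩ := hTot v hv'.1
      exact ⟨u, trap1 v hv hop u hu hru, hru⟩
    · obtain ⟨u, hu, hru, hnu⟩ := (attr_escape own R p U N hv'.1 hv'.2).2 hop
      exact ⟨u, Finset.mem_sdiff.mpr ⟨hu, hnu⟩, hru⟩
  obtain ⟨W₁, s₁, hW₁u, hW₁props⟩ := IH U₁ hU₁ss hTot₁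
  obtain ⟨χ, hχ⟩ := attr_strategy own R p U N
  by_cases hX : W₁ (!p) = ∅
  -- ============ Case 1 : opponent's subgame region is empty; p wins everywhere
  · have hWpU₁ : W₁ p = U₁ := by
      have h := bool_union W₁ p
      rw [hW₁u] at h
      rw [hX, Finset.union_empty] at h
      exact h
    set sp := fun v => if v ∈ U₁ then s₁ p v else if v ∈ A ∧ v ∉ N then χ v else dflt v with hsp
    have hspValid : ValidS own R p sp U := by
      intro v hv hop
      by_cases h1 : v ∈ U₁
      · have := (hW₁props p).2.1 v h1 hop
        rw [hsp]; simp only [if_pos h1]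
        exact ⟨hU₁U this.1, this.2⟩
      · by_cases h2 : v ∈ A ∧ v ∉ N
        · have hc := hχ v h2.1 h2.2 hop
          rw [hsp]; simp only [if_neg h1, if_pos h2]
          exact ⟨hAU (iter_subset_attr own R p U N hc.2), hc.1⟩
        · rw [hsp]; simp only [if_neg h1, if_neg h2]
          exact ⟨hdfltU v hv, hdfltR v hv⟩
    have hχprop : ∀ v, v ∈ A → v ∉ N → own v = p →
        sp v ∈ (astep own R p U)^[rk own R p U N v - 1] N := by
      intro v h1 h2 hop
      have hnU₁ : v ∉ U₁ := fun hc => (Finset.mem_sdiff.mp hc).2 h1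
      rw [hsp]; simp only [if_neg hnU₁, if_pos (⟨h1, h2⟩ : v ∈ A ∧ v ∉ N)]
      exact (hχ v h1 h2 hop).2
    have hClosedU : Closed own R p sp U U := fun v hv =>
      ⟨fun hop => (hspValid v hv hop).1, fun _ u hu _ => hu⟩
    have hClosedE : ∀ r : Bool, Closed own R r dflt ∅ U :=
      fun r v hv => absurd hv (Finset.notMem_empty v)
    have hWinE : ∀ r : Bool, WinsAll own R π r dflt U ∅ :=
      fun r v hv => absurd hv (Finset.notMem_empty v)
    have hWin : WinsAll own R π p sp U U := by
      intro v hv f hf0 hplay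
      by_cases hio : ∀ T, ∃ n, T ≤ n ∧ f n ∈ N
      · have hinf : InfO π f d := by
          intro T
          obtain ⟨n, hn, hnN⟩ := hio T
          exact ⟨n, hn, (Finset.mem_filter.mp hnN).2⟩
        have hmax : ∀ d', InfO π f d' → d' ≤ d := by
          intro d' hd'
          obtain ⟨k, _, hk⟩ := hd' 0
          rw [← hk]
          exact hπle _ (hplay.1 k)
        rw [good_iff_even π f d hinf hmax, hp]
        simp
      · push_neg at hio
        obtain ⟨T, hT⟩ := hio
        have hnotA : ∀ n, T ≤ n → f n ∉ A := by
          intro n hn hfA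
          obtain ⟨m, hm, hmN⟩ := attr_reach own R p U N sp hχprop f hplay n hfA
          exact hT m (by omega) hmN
        have hsuff : ∀ n, T ≤ n → f n ∈ U₁ := fun n hn =>
          Finset.mem_sdiff.mpr ⟨hplay.1 n, hnotA n hn⟩
        have hplay' : Play own R p (s₁ p) U₁ (fun k => f (k + T)) := by
          refine ⟨fun k => hsuff (k + T) (by omega), fun k => ⟨fun hop => ?_, fun hop => ?_⟩⟩
          · show f (k + 1 + T) = _
            have he : k + 1 + T = (k + T) + 1 := by omega
            rw [he, (hplay.2 (k + T)).1 hop, hsp]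
            simp only [if_pos (hsuff (k + T) (by omega))]
          · show R (f (k + T)) (f (k + 1 + T))
            have he : k + 1 + T = (k + T) + 1 := by omega
            rw [he]
            exact (hplay.2 (k + T)).2 hop
        have := (hW₁props p).2.2.2 (f T) (by rw [hWpU₁]; exact hsuff T le_rfl)
          (fun k => f (k + T)) (by simp) hplay'
        rw [good_shift π f T] at this
        exact this
    rcases Bool.eq_false_or_eq_true p with hh | hh
    · refine ⟨fun r => match r with | true => U | false => ∅,
        fun r => match r with | true => sp | false => dflt, by simp, ?_⟩
      intro r
      cases r
      · exact ⟨Finset.empty_subset U, hValidDflt false, hClosedE false, hWinE false⟩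
      · show U ⊆ U ∧ ValidS own R true sp U ∧ Closed own R true sp U U ∧
          WinsAll own R π true sp U U
        rw [← hh]
        exact ⟨le_refl U, hspValid, hClosedU, hWin⟩
    · refine ⟨fun r => match r with | true => ∅ | false => U,
        fun r => match r with | true => dflt | false => sp, by simp, ?_⟩
      intro r
      cases r
      · show U ⊆ U ∧ ValidS own R false sp U ∧ Closed own R false sp U U ∧
          WinsAll own R π false sp U U
        rw [← hh]
        exact ⟨le_refl U, hspValid, hClosedU, hWin⟩
      · exact ⟨Finset.empty_subset U, hValidDflt true, hClosedE true, hWinE true⟩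
  -- ============ Case 2 : opponent's subgame region X is nonempty
  · have hXne : (W₁ (!p)).Nonempty := Finset.nonempty_iff_ne_empty.mpr hX
    set q := !p with hq
    set X := W₁ q with hXdef
    have hXU₁ : X ⊆ U₁ := (hW₁props q).1
    have hXU : X ⊆ U := hXU₁.trans hU₁U
    set B := attr own R q U X with hB
    have hXB : X ⊆ B := subset_attr own R q U X
    have hBU : B ⊆ U := attr_subset own R q U X hXU
    obtain ⟨χ', hχ'⟩ := attr_strategy own R q U X
    set U₂ := U \ B with hU₂
    have hU₂U : U₂ ⊆ U := Finset.sdiff_subset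
    have hU₂ss : U₂ ⊂ U := Finset.sdiff_ssubset hBU (hXne.mono hXB)
    have trap2 : ∀ v ∈ U₂, own v = q → ∀ u ∈ U, R v u → u ∈ U₂ := by
      intro v hv hop u hu hru
      rw [Finset.mem_sdiff] at hv ⊢
      exact ⟨hu, (attr_escape own R q U X hv.1 hv.2).1 hop u hru⟩
    have hTot₂ : ∀ v ∈ U₂, ∃ u ∈ U₂, R v u := by
      intro v hv
      have hv' := Finset.mem_sdiff.mp hv
      by_cases hop : own v = q
      · obtain ⟨u, hu, hru⟩ := hTot v hv'.1
        exact ⟨u, trap2 v hv hop u hu hru, hru⟩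
      · obtain ⟨u, hu, hru, hnu⟩ := (attr_escape own R q U X hv'.1 hv'.2).2 hop
        exact ⟨u, Finset.mem_sdiff.mpr ⟨hu, hnu⟩, hru⟩
    obtain ⟨W₂, s₂, hW₂u, hW₂props⟩ := IH U₂ hU₂ss hTot₂
    set τ := fun v => if v ∈ B then (if v ∈ X then s₁ q v else χ' v)
      else if v ∈ W₂ q then s₂ q v else dflt v with hτ
    set sp' := fun v => if v ∈ U₂ then s₂ p v else dflt v with hsp'
    have hqp : ∀ v : S, own v ≠ q → own v = p := by
      intro v h
      rw [hq] at h
      exact ne_bnot h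
    have hpq : ∀ v : S, own v ≠ p → own v = q := by
      intro v h
      rw [hq]
      exact bne_of_ne h
    -- X is closed under both (σ₁ for q, and arbitrary moves of p stay in X)
    have Xclosed : ∀ v ∈ X, (own v = q → s₁ q v ∈ X) ∧
        (own v ≠ q → ∀ u ∈ U, R v u → u ∈ X) := by
      intro v hv
      have hC := (hW₁props q).2.2.1 v hv
      refine ⟨hC.1, fun hop u hu hru => ?_⟩
      have hu₁ : u ∈ U₁ := trap1 v (hXU₁ hv) (hqp v hop) u hu hru
      exact hC.2 hop u hu₁ hru
    have hBstep : ∀ v ∈ U, own v = q → ∀ u, R v u → u ∈ B → v ∈ B := by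
      intro v hv hop u hru huB
      have : v ∈ astep own R q U B :=
        Finset.mem_union_right _ (Finset.mem_filter.mpr ⟨hv, Or.inl ⟨hop, u, huB, hru⟩⟩)
      rwa [hB, attr_fixed] at this
    -- Closedness of the region W₂ p
    have ClosedW2p : ∀ v ∈ W₂ p, (own v = p → sp' v ∈ W₂ p) ∧
        (own v ≠ p → ∀ u ∈ U, R v u → u ∈ W₂ p) := by
      intro v hv
      have hvU₂ := (hW₂props p).1 hv
      have hC := (hW₂props p).2.2.1 v hv
      constructor
      · intro hop
        rw [hsp']; simp only [if_pos hvU₂]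
        exact hC.1 hop
      · intro hop u hu hru
        have huU₂ : u ∈ U₂ := by
          by_contra hc
          have huB : u ∈ B := by
            rw [hU₂, Finset.mem_sdiff] at hc
            push_neg at hc
            exact hc hu
          exact (Finset.mem_sdiff.mp hvU₂).2 (hBstep v (hU₂U hvU₂) (hpq v hop) u hru huB)
        exact hC.2 hop u huU₂ hru
    -- Closedness of the region B ∪ W₂ q
    have ClosedWq : ∀ v ∈ B ∪ W₂ q, (own v = q → τ v ∈ B ∪ W₂ q) ∧
        (own v ≠ q → ∀ u ∈ U, R v u → u ∈ B ∪ W₂ q) := by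
      intro v hv
      by_cases hvB : v ∈ B
      · by_cases hvX : v ∈ X
        · constructor
          · intro hop
            rw [hτ]; simp only [if_pos hvB, if_pos hvX]
            exact Finset.mem_union_left _ (hXB ((Xclosed v hvX).1 hop))
          · intro hop u hu hru
            exact Finset.mem_union_left _ (hXB ((Xclosed v hvX).2 hop u hu hru))
        · constructor
          · intro hop
            rw [hτ]; simp only [if_pos hvB, if_neg hvX]
            exact Finset.mem_union_left _
              (iter_subset_attr own R q U X (hχ' v hvB hvX hop).2)
          · intro hop u hu hru
            exact Finset.mem_union_left _ (attr_opp_step own R q U X hvB hvX hop hu hru)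
      · have hvW : v ∈ W₂ q := by
          rcases Finset.mem_union.mp hv with h | h
          · exact absurd h hvB
          · exact h
        have hC := (hW₂props q).2.2.1 v hvW
        constructor
        · intro hop
          rw [hτ]; simp only [if_neg hvB, if_pos hvW]
          exact Finset.mem_union_right _ (hC.1 hop)
        · intro hop u hu hru
          by_cases huB : u ∈ B
          · exact Finset.mem_union_left _ huB
          · exact Finset.mem_union_right _
              (hC.2 hop u (Finset.mem_sdiff.mpr ⟨hu, huB⟩) hru)
    -- validity
    have hsp'Valid : ValidS own R p sp' U := by
      intro v hv hop
      by_cases h1 : v ∈ U₂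
      · have := (hW₂props p).2.1 v h1 hop
        rw [hsp']; simp only [if_pos h1]
        exact ⟨hU₂U this.1, this.2⟩
      · rw [hsp']; simp only [if_neg h1]
        exact ⟨hdfltU v hv, hdfltR v hv⟩
    have hτValid : ValidS own R q τ U := by
      intro v hv hop
      by_cases h1 : v ∈ B
      · by_cases h2 : v ∈ X
        · have := (hW₁props q).2.1 v (hXU₁ h2) hop
          rw [hτ]; simp only [if_pos h1, if_pos h2]
          exact ⟨hU₁U this.1, this.2⟩
        · have hc := hχ' v h1 h2 hop
          rw [hτ]; simp only [if_pos h1, if_neg h2]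
          exact ⟨hBU (iter_subset_attr own R q U X hc.2), hc.1⟩
      · by_cases h2 : v ∈ W₂ q
        · have := (hW₂props q).2.1 v ((hW₂props q).1 h2) hop
          rw [hτ]; simp only [if_neg h1, if_pos h2]
          exact ⟨hU₂U this.1, this.2⟩
        · rw [hτ]; simp only [if_neg h1, if_neg h2]
          exact ⟨hdfltU v hv, hdfltR v hv⟩
    -- winning for p from W₂ p
    have hWinp : WinsAll own R π p sp' U (W₂ p) := by
      intro v hv f hf0 hplay
      have inv : ∀ n, f n ∈ W₂ p := by
        intro n
        induction n with
        | zero => rw [hf0]; exact hv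
        | succ n ihn =>
          by_cases hop : own (f n) = p
          · rw [(hplay.2 n).1 hop]
            exact (ClosedW2p _ ihn).1 hop
          · exact (ClosedW2p _ ihn).2 hop _ (hplay.1 (n+1)) ((hplay.2 n).2 hop)
      have hplay₂ : Play own R p (s₂ p) U₂ f := by
        refine ⟨fun n => (hW₂props p).1 (inv n), fun n => ⟨fun hop => ?_, fun hop => ?_⟩⟩
        · rw [(hplay.2 n).1 hop, hsp']
          simp only [if_pos ((hW₂props p).1 (inv n))]
        · exact (hplay.2 n).2 hop
      exact (hW₂props p).2.2.2 v hv f hf0 hplay₂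
    -- winning for q from B ∪ W₂ q
    have hτattr : ∀ v, v ∈ B → v ∉ X → own v = q →
        τ v ∈ (astep own R q U)^[rk own R q U X v - 1] X := by
      intro v h1 h2 hop
      rw [hτ]; simp only [if_pos h1, if_neg h2]
      exact (hχ' v h1 h2 hop).2
    have hWinq : WinsAll own R π q τ U (B ∪ W₂ q) := by
      intro v hv f hf0 hplay
      have inv : ∀ n, f n ∈ B ∪ W₂ q := by
        intro n
        induction n with
        | zero => rw [hf0]; exact hv
        | succ n ihn =>
          by_cases hop : own (f n) = q
          · rw [(hplay.2 n).1 hop]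
            exact (ClosedWq _ ihn).1 hop
          · exact (ClosedWq _ ihn).2 hop _ (hplay.1 (n+1)) ((hplay.2 n).2 hop)
      by_cases hfB : ∃ n, f n ∈ B
      · obtain ⟨n, hn⟩ := hfB
        obtain ⟨m, hm, hmX⟩ := attr_reach own R q U X τ hτattr f hplay n hn
        have stayX : ∀ j, m ≤ j → f j ∈ X := by
          intro j hj
          induction j with
          | zero =>
            have : m = 0 := by omega
            rw [← this]; exact hmX
          | succ j ihj =>
            rcases Nat.lt_or_ge m (j+1) with h' | h'
            · have hfj : f j ∈ X := ihj (by omega)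
              by_cases hop : own (f j) = q
              · rw [(hplay.2 j).1 hop, hτ]
                simp only [if_pos (hXB hfj), if_pos hfj]
                exact (Xclosed _ hfj).1 hop
              · exact (Xclosed _ hfj).2 hop _ (hplay.1 (j+1)) ((hplay.2 j).2 hop)
            · have : m = j + 1 := by omega
              rw [← this]; exact hmX
        have hplay₁ : Play own R q (s₁ q) U₁ (fun k => f (k + m)) := by
          refine ⟨fun k => hXU₁ (stayX (k + m) (by omega)),
            fun k => ⟨fun hop => ?_, fun hop => ?_⟩⟩
          · show f (k + 1 + m) = _
            have he : k + 1 + m = (k + m) + 1 := by omega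
            have hfk : f (k + m) ∈ X := stayX (k + m) (by omega)
            rw [he, (hplay.2 (k + m)).1 hop, hτ]
            simp only [if_pos (hXB hfk), if_pos hfk]
          · show R (f (k + m)) (f (k + 1 + m))
            have he : k + 1 + m = (k + m) + 1 := by omega
            rw [he]
            exact (hplay.2 (k + m)).2 hop
        have := (hW₁props q).2.2.2 (f m) (stayX m le_rfl) (fun k => f (k + m)) (by simp) hplay₁
        rw [good_shift π f m] at this
        exact this
      · push_neg at hfB
        have invq : ∀ n, f n ∈ W₂ q := by
          intro n
          rcases Finset.mem_union.mp (inv n) with h | h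
          · exact absurd h (hfB n)
          · exact h
        have hplay₂ : Play own R q (s₂ q) U₂ f := by
          refine ⟨fun n => (hW₂props q).1 (invq n), fun n => ⟨fun hop => ?_, fun hop => ?_⟩⟩
          · rw [(hplay.2 n).1 hop, hτ]
            simp only [if_neg (hfB n), if_pos (invq n)]
          · exact (hplay.2 n).2 hop
        exact (hW₂props q).2.2.2 (f 0) (invq 0) f rfl hplay₂
    -- packaging
    have hkey : W₂ p ∪ (B ∪ W₂ q) = U := by
      have h2 : W₂ p ∪ W₂ q = U₂ := by
        have h3 := bool_union W₂ p
        rw [hW₂u] at h3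
        rw [← hq] at h3
        exact h3
      have h4 : W₂ p ∪ (B ∪ W₂ q) = (W₂ p ∪ W₂ q) ∪ B := by
        ext x
        simp only [Finset.mem_union]
        tauto
      rw [h4, h2, hU₂]
      exact Finset.sdiff_union_of_subset hBU
    have packp : W₂ p ⊆ U ∧ ValidS own R p sp' U ∧ Closed own R p sp' (W₂ p) U ∧
        WinsAll own R π p sp' U (W₂ p) :=
      ⟨(hW₂props p).1.trans hU₂U, hsp'Valid, fun v hv => ClosedW2p v hv, hWinp⟩
    have packq : (B ∪ W₂ q) ⊆ U ∧ ValidS own R q τ U ∧ Closed own R q τ (B ∪ W₂ q) U ∧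
        WinsAll own R π q τ U (B ∪ W₂ q) :=
      ⟨Finset.union_subset hBU ((hW₂props q).1.trans hU₂U), hτValid,
        fun v hv => ClosedWq v hv, hWinq⟩
    rcases Bool.eq_false_or_eq_true p with hh | hh
    · have hqf : q = false := by rw [hq, hh]; rfl
      refine ⟨fun r => match r with | true => W₂ p | false => B ∪ W₂ q,
        fun r => match r with | true => sp' | false => τ, ?_, ?_⟩
      · show W₂ p ∪ (B ∪ W₂ q) = U
        exact hkey
      · intro r
        cases r
        · show (B ∪ W₂ q) ⊆ U ∧ ValidS own R false τ U ∧ Closed own R false τ (B ∪ W₂ q) U ∧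
            WinsAll own R π false τ U (B ∪ W₂ q)
          rw [← hqf]
          exact packq
        · show W₂ p ⊆ U ∧ ValidS own R true sp' U ∧ Closed own R true sp' (W₂ p) U ∧
            WinsAll own R π true sp' U (W₂ p)
          rw [← hh]
          exact packp
    · have hqf : q = true := by rw [hq, hh]; rfl
      refine ⟨fun r => match r with | true => B ∪ W₂ q | false => W₂ p,
        fun r => match r with | true => τ | false => sp', ?_, ?_⟩
      · show (B ∪ W₂ q) ∪ W₂ p = U
        rw [Finset.union_comm]
        exact hkey
      · intro r
        cases r
        · show W₂ p ⊆ U ∧ ValidS own R false sp' U ∧ Closed own R false sp' (W₂ p) U ∧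
            WinsAll own R π false sp' U (W₂ p)
          rw [← hh]
          exact packp
        · show (B ∪ W₂ q) ⊆ U ∧ ValidS own R true τ U ∧ Closed own R true τ (B ∪ W₂ q) U ∧
            WinsAll own R π true τ U (B ∪ W₂ q)
          rw [← hqf]
          exact packq

end
end ZK


namespace Red
open Classical
attribute [local instance 10] Classical.propDecidable
set_option linter.unusedSectionVars false

abbrev Mem (Emax : ℕ) : Type := Option (Fin (Emax + 1))

variable {V : Type} [Fintype V]

noncomputable def pOwn (O : Arena V (ℕ × ℤ)) (Emax : ℕ) : V × Mem Emax → Bool :=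
  fun s => if s.1 ∈ O.V1 then true else false

def pR (O : Arena V (ℕ × ℤ)) (Emax : ℕ) (upd : Mem Emax → ℕ × ℤ → Mem Emax) :
    V × Mem Emax → V × Mem Emax → Prop := fun a b =>
  ((a.1, b.1) ∈ O.E ∧ b.2 = upd a.2 (O.Γ a.1)) ∨ (a.1 ∉ O.vertices ∧ b = a)

noncomputable def pπ (O : Arena V (ℕ × ℤ)) (Emax : ℕ) : V × Mem Emax → ℕ := fun s =>
  match s.2 with
  | none => 1
  | some _ => (O.Γ s.1).1

lemma pOwn_iff (O : Arena V (ℕ × ℤ)) (Emax : ℕ) (s : V × Mem Emax) :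
    pOwn O Emax s = true ↔ s.1 ∈ O.V1 := by
  unfold pOwn; split_ifs with h <;> simp [h]

lemma seqPrefix_succ {C : Type} (ρ : ℕ → C) (n : ℕ) :
    seqPrefix ρ (n + 1) = seqPrefix ρ n ++ [ρ n] := by
  simp [seqPrefix, List.range_succ]

lemma play_eq {C : Type} (O : Arena V C) (g : List C → V → V) (v0 : V) (n : ℕ) :
    O.play g [] v0 n = O.Γ (O.stepSeq g [] v0 n).2 := by
  simp [Arena.play]

lemma stepSeq_fst {C : Type} (O : Arena V C) (g : List C → V → V) (v0 : V) (n : ℕ) :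
    (O.stepSeq g [] v0 n).1 = seqPrefix (O.play g [] v0) n := by
  induction n with
  | zero => simp [Arena.stepSeq, seqPrefix]
  | succ n ih =>
    show (O.stepSeq g [] v0 n).1 ++ [O.Γ (O.stepSeq g [] v0 n).2] = _
    rw [ih, seqPrefix_succ, play_eq]

lemma stepSeq_mem {C : Type} (O : Arena V C) (hwf : O.WF) (g : List C → V → V)
    (hg : ∀ w, ∀ v ∈ O.vertices, (v, g w v) ∈ O.E) (v0 : V) (hv0 : v0 ∈ O.vertices) :
    ∀ n, (O.stepSeq g [] v0 n).2 ∈ O.vertices := by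
  intro n
  induction n with
  | zero => exact hv0
  | succ n ih =>
    show g (O.stepSeq g [] v0 n).1 (O.stepSeq g [] v0 n).2 ∈ O.vertices
    exact (hwf.2.1 _ (hg _ _ ih)).2

lemma combine_edge {C : Type} (O : Arena V C) (hwf : O.WF)
    (σ1 σ2 : List C → V → V) (h1 : O.Valid1 σ1) (h2 : O.Valid2 σ2) :
    ∀ w, ∀ v ∈ O.vertices, (v, O.combine σ1 σ2 w v) ∈ O.E := by
  intro w v hv
  unfold Arena.combine
  split_ifs with h
  · exact h1 w v h
  · rcases hv with hv | hv
    · exact absurd hv h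
    · exact h2 w v hv

/-- The correspondence between abstract parity winning and the machine-condition. -/
lemma good_corr (O : Arena V (ℕ × ℤ)) (Emax : ℕ) (upd : Mem Emax → ℕ × ℤ → Mem Emax)
    (hdead : ∀ c, upd none c = none) (ρ : ℕ → ℕ × ℤ) (F : ℕ → V × Mem Emax)
    (hF2 : ∀ n, (F n).2 = (seqPrefix ρ n).foldl upd (some 0))
    (hF1 : ∀ n, O.Γ (F n).1 = ρ n) :
    ZK.Good (pπ O Emax) F ↔
      (ParityCond ρ ∧ ∀ n, (seqPrefix ρ n).foldl upd (some 0) ≠ none) := by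
  by_cases halive : ∀ n, (seqPrefix ρ n).foldl upd (some 0) ≠ none
  · have hpπ : ∀ n, pπ O Emax (F n) = (ρ n).1 := by
      intro n
      have h2 := hF2 n
      unfold pπ
      cases hm : (F n).2 with
      | none => exact absurd (h2 ▸ hm).symm (fun hc => halive n hc.symm)
      | some e =>
        show (O.Γ (F n).1).1 = (ρ n).1
        rw [hF1 n]
    have hio : ∀ d, ZK.InfO (pπ O Emax) F d ↔ InfOften ρ d := by
      intro d
      unfold ZK.InfO InfOften
      constructor
      · intro h N; obtain ⟨k, hk, he⟩ := h N; exact ⟨k, hk, by rw [← hpπ k]; exact he⟩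
      · intro h N; obtain ⟨k, hk, he⟩ := h N; exact ⟨k, hk, by rw [hpπ k]; exact he⟩
    have hgp : ZK.Good (pπ O Emax) F ↔ ParityCond ρ := by
      unfold ZK.Good ParityCond
      exact exists_congr fun d => and_congr_right fun _ =>
        and_congr (hio d) (forall_congr' fun d' => imp_congr (hio d') Iff.rfl)
    rw [hgp]
    simp [halive]
  · push_neg at halive
    obtain ⟨n0, hn0⟩ := halive
    have habs : ∀ n, n0 ≤ n → (seqPrefix ρ n).foldl upd (some 0) = none := by
      intro n hn
      induction n, hn using Nat.le_induction with
      | base => exact hn0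
      | succ n hn ih =>
        rw [seqPrefix_succ, List.foldl_append, ih]
        exact hdead _
    have hnright : ¬(ParityCond ρ ∧ ∀ n, (seqPrefix ρ n).foldl upd (some 0) ≠ none) := by
      rintro ⟨-, h⟩
      exact h n0 hn0
    have hdeadπ : ∀ k, n0 ≤ k → pπ O Emax (F k) = 1 := by
      intro k hk
      have : (F k).2 = none := by rw [hF2 k]; exact habs k hk
      unfold pπ
      rw [this]
    have hngood : ¬ZK.Good (pπ O Emax) F := by
      rintro ⟨d, hev, hinf, -⟩
      obtain ⟨k, hk, he⟩ := hinf n0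
      rw [hdeadπ k hk] at he
      rw [← he] at hev
      simp at hev
    exact iff_of_false hngood hnright

theorem redMain (O : Arena V (ℕ × ℤ)) (hwf : O.WF) (Emax : ℕ)
    (upd : Mem Emax → ℕ × ℤ → Mem Emax) (hdead : ∀ c, upd none c = none)
    (Wc : Set (ℕ → ℕ × ℤ))
    (hWc : ∀ ρ : ℕ → ℕ × ℤ, ρ ∈ Wc ↔
      (ParityCond ρ ∧ ∀ n, (seqPrefix ρ n).foldl upd (some 0) ≠ none))
    (v0 : V) (hv0 : v0 ∈ O.vertices) :
    (∃ σ1, O.Valid1 σ1 ∧ Arena.IsFMSize O.V1 σ1 (Emax + 2) ∧ O.Winning1 Wc σ1 [] v0) ∨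
    (∃ σ2, O.Valid2 σ2 ∧ Arena.IsFMSize O.V2 σ2 (Emax + 2) ∧ O.Winning2 Wc σ2 [] v0) := by
  classical
  have hTot : ∀ a ∈ (Finset.univ : Finset (V × Mem Emax)), ∃ b ∈ Finset.univ, pR O Emax upd a b := by
    intro a _
    by_cases h : a.1 ∈ O.vertices
    · obtain ⟨u, hu⟩ := hwf.2.2 a.1 h
      exact ⟨(u, upd a.2 (O.Γ a.1)), Finset.mem_univ _, Or.inl ⟨hu, rfl⟩⟩
    · exact ⟨a, Finset.mem_univ _, Or.inr ⟨h, rfl⟩⟩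
  obtain ⟨W, st, hWu, hprops⟩ :=
    ZK.zielonka (pOwn O Emax) (pR O Emax upd) (pπ O Emax) Finset.univ hTot
  have hv0W := (Finset.ext_iff.mp hWu (v0, (some 0 : Mem Emax))).mpr (Finset.mem_univ _)
  rw [Finset.mem_union] at hv0W
  rcases hv0W with hWin | hWin
  · -- Player 1 wins
    left
    set σ1 : List (ℕ × ℤ) → V → V :=
      fun w v => (st true (v, w.foldl upd (some 0))).1 with hσ1
    have hValid := (hprops true).2.1
    have hWinsAll := (hprops true).2.2.2
    have hval1 : O.Valid1 σ1 := by
      intro w v hv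
      have hR := (hValid (v, w.foldl upd (some 0)) (Finset.mem_univ _)
        ((pOwn_iff O Emax _).mpr hv)).2
      rcases hR with ⟨he, -⟩ | ⟨hnv, -⟩
      · exact he
      · exact absurd (Or.inl hv) hnv
    refine ⟨σ1, hval1, ?_, ?_⟩
    · exact ⟨Mem Emax, inferInstance, by simp, some 0, upd,
        fun m v => (st true (v, m)).1, fun w v _ => rfl⟩
    · intro σ2 hσ2
      set g := O.combine σ1 σ2 with hg
      set ρ := O.play g [] v0 with hρdef
      set F : ℕ → V × Mem Emax :=
        fun n => ((O.stepSeq g [] v0 n).2, (O.stepSeq g [] v0 n).1.foldl upd (some 0)) with hF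
      have hedge := combine_edge O hwf σ1 σ2 hval1 hσ2
      have hmem := stepSeq_mem O hwf g hedge v0 hv0
      have hF2 : ∀ n, (F n).2 = (seqPrefix ρ n).foldl upd (some 0) := by
        intro n; rw [hF]; simp only; rw [stepSeq_fst]
      have hF1 : ∀ n, O.Γ (F n).1 = ρ n := by
        intro n; rw [hρdef, play_eq]
      have hFsucc2 : ∀ n, (F (n+1)).2 = upd ((F n).2) (O.Γ ((F n).1)) := by
        intro n
        show ((O.stepSeq g [] v0 n).1 ++ [O.Γ (O.stepSeq g [] v0 n).2]).foldl upd (some 0) = _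
        rw [List.foldl_append]
        rfl
      have hplay : ZK.Play (pOwn O Emax) (pR O Emax upd) true (st true) Finset.univ F := by
        refine ⟨fun n => Finset.mem_univ _, fun n => ⟨fun hop => ?_, fun hop => ?_⟩⟩
        · have hv1 : (F n).1 ∈ O.V1 := (pOwn_iff O Emax _).mp hop
          have hR := (hValid (F n) (Finset.mem_univ _) hop).2
          have hRsnd : (st true (F n)).2 = upd ((F n).2) (O.Γ ((F n).1)) := by
            rcases hR with ⟨-, h2⟩ | ⟨hnv, -⟩
            · exact h2
            · exact absurd (Or.inl hv1) hnv
          have hfst : (F (n+1)).1 = (st true (F n)).1 := by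
            show g (O.stepSeq g [] v0 n).1 (O.stepSeq g [] v0 n).2 = _
            rw [hg]
            unfold Arena.combine
            split_ifs with hif
            · rfl
            · exact absurd hv1 hif
          exact Prod.ext hfst (by rw [hFsucc2 n, hRsnd])
        · have hv1 : (F n).1 ∉ O.V1 := fun hc => hop ((pOwn_iff O Emax _).mpr hc)
          have hv2 : (F n).1 ∈ O.V2 := by
            rcases hmem n with h | h
            · exact absurd h hv1
            · exact h
          have hfst : (F (n+1)).1 = σ2 (O.stepSeq g [] v0 n).1 ((F n).1) := by
            show g (O.stepSeq g [] v0 n).1 (O.stepSeq g [] v0 n).2 = _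
            rw [hg]
            unfold Arena.combine
            split_ifs with hif
            · exact absurd hif hv1
            · rfl
          refine Or.inl ⟨?_, hFsucc2 n⟩
          rw [hfst]
          exact hσ2 _ _ hv2
      have hF0 : F 0 = (v0, (some 0 : Mem Emax)) := rfl
      have hgood := (hWinsAll (v0, some 0) hWin F hF0 hplay).mpr rfl
      rw [good_corr O Emax upd hdead ρ F hF2 hF1] at hgood
      exact (hWc ρ).mpr hgood
  · -- Player 2 wins
    right
    set σ2 : List (ℕ × ℤ) → V → V :=
      fun w v => (st false (v, w.foldl upd (some 0))).1 with hσ2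
    have hValid := (hprops false).2.1
    have hWinsAll := (hprops false).2.2.2
    have hval2 : O.Valid2 σ2 := by
      intro w v hv
      have hown : pOwn O Emax (v, w.foldl upd (some 0)) = false := by
        unfold pOwn
        rw [if_neg (Set.disjoint_right.mp hwf.1 hv)]
      have hR := (hValid (v, w.foldl upd (some 0)) (Finset.mem_univ _) hown).2
      rcases hR with ⟨he, -⟩ | ⟨hnv, -⟩
      · exact he
      · exact absurd (Or.inr hv) hnv
    refine ⟨σ2, hval2, ?_, ?_⟩
    · exact ⟨Mem Emax, inferInstance, by simp, some 0, upd,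
        fun m v => (st false (v, m)).1, fun w v _ => rfl⟩
    · intro σ1 hσ1
      set g := O.combine σ1 σ2 with hg
      set ρ := O.play g [] v0 with hρdef
      set F : ℕ → V × Mem Emax :=
        fun n => ((O.stepSeq g [] v0 n).2, (O.stepSeq g [] v0 n).1.foldl upd (some 0)) with hF
      have hedge := combine_edge O hwf σ1 σ2 hσ1 hval2
      have hmem := stepSeq_mem O hwf g hedge v0 hv0
      have hF2 : ∀ n, (F n).2 = (seqPrefix ρ n).foldl upd (some 0) := by
        intro n; rw [hF]; simp only; rw [stepSeq_fst]
      have hF1 : ∀ n, O.Γ (F n).1 = ρ n := by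
        intro n; rw [hρdef, play_eq]
      have hFsucc2 : ∀ n, (F (n+1)).2 = upd ((F n).2) (O.Γ ((F n).1)) := by
        intro n
        show ((O.stepSeq g [] v0 n).1 ++ [O.Γ (O.stepSeq g [] v0 n).2]).foldl upd (some 0) = _
        rw [List.foldl_append]
        rfl
      have hplay : ZK.Play (pOwn O Emax) (pR O Emax upd) false (st false) Finset.univ F := by
        refine ⟨fun n => Finset.mem_univ _, fun n => ⟨fun hop => ?_, fun hop => ?_⟩⟩
        · have hv1 : (F n).1 ∉ O.V1 := by
            intro hc
            rw [(pOwn_iff O Emax (F n)).mpr hc] at hop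
            exact Bool.noConfusion hop
          have hR := (hValid (F n) (Finset.mem_univ _) hop).2
          have hRsnd : (st false (F n)).2 = upd ((F n).2) (O.Γ ((F n).1)) := by
            rcases hR with ⟨-, h2⟩ | ⟨hnv, -⟩
            · exact h2
            · exact absurd (hmem n) hnv
          have hfst : (F (n+1)).1 = (st false (F n)).1 := by
            show g (O.stepSeq g [] v0 n).1 (O.stepSeq g [] v0 n).2 = _
            rw [hg]
            unfold Arena.combine
            split_ifs with hif
            · exact absurd hif hv1
            · rfl
          exact Prod.ext hfst (by rw [hFsucc2 n, hRsnd])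
        · have hv1 : (F n).1 ∈ O.V1 := by
            by_contra hc
            have : pOwn O Emax (F n) = false := by
              unfold pOwn; rw [if_neg hc]
            exact hop this
          have hfst : (F (n+1)).1 = σ1 (O.stepSeq g [] v0 n).1 ((F n).1) := by
            show g (O.stepSeq g [] v0 n).1 (O.stepSeq g [] v0 n).2 = _
            rw [hg]
            unfold Arena.combine
            split_ifs with hif
            · rfl
            · exact absurd hv1 hif
          refine Or.inl ⟨?_, hFsucc2 n⟩
          rw [hfst]
          exact hσ1 _ _ hv1
      have hF0 : F 0 = (v0, (some 0 : Mem Emax)) := rfl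
      have hgood := hWinsAll (v0, some 0) hWin F hF0 hplay
      have hngood : ¬ZK.Good (pπ O Emax) F := by
        intro hc
        exact Bool.noConfusion (hgood.mp hc)
      rw [good_corr O Emax upd hdead ρ F hF2 hF1] at hngood
      intro hmemW
      exact hngood ((hWc ρ).mp hmemW)

end Red


namespace Red

def updS (Emax : ℕ) : Mem Emax → ℕ × ℤ → Mem Emax
  | none, _ => none
  | some e, c =>
    if h : 0 ≤ (e.val : ℤ) + c.2 ∧ (e.val : ℤ) + c.2 ≤ (Emax : ℤ) then
      some ⟨((e.val : ℤ) + c.2).toNat, by omega⟩ else none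

def updB (Emax : ℕ) : Mem Emax → ℕ × ℤ → Mem Emax
  | none, _ => none
  | some e, c =>
    if h : (e.val : ℤ) + c.2 < 0 then none
    else some ⟨(min ((e.val : ℤ) + c.2) (Emax : ℤ)).toNat, by omega⟩

lemma spill_foldl (Emax : ℕ) (ρ : ℕ → ℕ × ℤ) :
    ∀ (n : ℕ) (e : Fin (Emax + 1)),
      (seqPrefix ρ n).foldl (updS Emax) (some 0) = some e →
      (e.val : ℤ) = ∑ i ∈ Finset.range n, (ρ i).2 := by
  intro n
  induction n with
  | zero =>
    intro e h
    simp [seqPrefix] at h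
    simp [← h]
  | succ n ih =>
    intro e h
    rw [seqPrefix_succ, List.foldl_append] at h
    cases hm : (seqPrefix ρ n).foldl (updS Emax) (some 0) with
    | none => rw [hm] at h; simp [updS] at h
    | some e' =>
      rw [hm] at h
      have he' := ih e' hm
      simp only [List.foldl_cons, List.foldl_nil, updS] at h
      split at h
      · rename_i hcond
        rw [Finset.sum_range_succ, ← he']
        have := Option.some_injective _ h
        have hval : e.val = ((e'.val : ℤ) + (ρ n).2).toNat := by rw [← this]
        omega
      · cases h

lemma spill_alive (Emax : ℕ) (ρ : ℕ → ℕ × ℤ)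
    (h : ∀ n : ℕ, 0 ≤ (∑ i ∈ Finset.range n, (ρ i).2) ∧
      (∑ i ∈ Finset.range n, (ρ i).2) ≤ (Emax : ℤ)) :
    ∀ n, (seqPrefix ρ n).foldl (updS Emax) (some 0) ≠ none := by
  have key : ∀ n, ∃ e : Fin (Emax + 1),
      (seqPrefix ρ n).foldl (updS Emax) (some 0) = some e ∧
      (e.val : ℤ) = ∑ i ∈ Finset.range n, (ρ i).2 := by
    intro n
    induction n with
    | zero => exact ⟨0, by simp [seqPrefix], by simp⟩
    | succ n ih =>
      obtain ⟨e, he, hev⟩ := ih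
      have hcond : 0 ≤ (e.val : ℤ) + (ρ n).2 ∧ (e.val : ℤ) + (ρ n).2 ≤ (Emax : ℤ) := by
        have := h (n + 1)
        rw [Finset.sum_range_succ] at this
        omega
      refine ⟨⟨((e.val : ℤ) + (ρ n).2).toNat, by omega⟩, ?_, ?_⟩
      · rw [seqPrefix_succ, List.foldl_append, he]
        simp only [List.foldl_cons, List.foldl_nil, updS]
        rw [dif_pos hcond]
      · show (((((e.val : ℤ) + (ρ n).2).toNat : ℕ)) : ℤ) = _
        rw [Finset.sum_range_succ]
        omega
  intro n
  obtain ⟨e, he, -⟩ := key n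
  rw [he]
  exact Option.some_ne_none e

lemma spillW_iff (Emax : ℕ) (ρ : ℕ → ℕ × ℤ) :
    ρ ∈ spillW Emax ↔
      (ParityCond ρ ∧ ∀ n, (seqPrefix ρ n).foldl (updS Emax) (some 0) ≠ none) := by
  constructor
  · rintro ⟨hp, he⟩
    exact ⟨hp, spill_alive Emax ρ he⟩
  · rintro ⟨hp, ha⟩
    refine ⟨hp, fun n => ?_⟩
    cases hm : (seqPrefix ρ n).foldl (updS Emax) (some 0) with
    | none => exact absurd hm (ha n)
    | some e =>
      have := spill_foldl Emax ρ n e hm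
      have hlt := e.isLt
      omega

lemma batt_foldl (Emax : ℕ) (ρ : ℕ → ℕ × ℤ) :
    ∀ (n : ℕ) (e : Fin (Emax + 1)),
      (seqPrefix ρ n).foldl (updB Emax) (some 0) = some e →
      (e.val : ℤ) = batteryLevel (fun i => (ρ i).2) (Emax : ℤ) n ∧
      ∀ k < n, 0 ≤ batteryLevel (fun i => (ρ i).2) (Emax : ℤ) k + (ρ k).2 := by
  intro n
  induction n with
  | zero =>
    intro e h
    simp [seqPrefix] at h
    constructor
    · simp [← h, batteryLevel]
    · omega
  | succ n ih =>
    intro e h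
    rw [seqPrefix_succ, List.foldl_append] at h
    cases hm : (seqPrefix ρ n).foldl (updB Emax) (some 0) with
    | none => rw [hm] at h; simp [updB] at h
    | some e' =>
      rw [hm] at h
      obtain ⟨he', hconds⟩ := ih e' hm
      simp only [List.foldl_cons, List.foldl_nil, updB] at h
      split at h
      · cases h
      · rename_i hcond
        have := Option.some_injective _ h
        have hval : e.val = (min ((e'.val : ℤ) + (ρ n).2) (Emax : ℤ)).toNat := by
          rw [← this]
        have hBsucc : batteryLevel (fun i => (ρ i).2) (Emax : ℤ) (n + 1) =
            min (batteryLevel (fun i => (ρ i).2) (Emax : ℤ) n + (ρ n).2) (Emax : ℤ) := rfl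
        constructor
        · rw [hBsucc, ← he']
          omega
        · intro k hk
          rcases Nat.lt_or_ge k n with hkn | hkn
          · exact hconds k hkn
          · have : k = n := by omega
            subst this
            rw [← he']
            omega
  
lemma batt_alive (Emax : ℕ) (ρ : ℕ → ℕ × ℤ)
    (h : ∀ n : ℕ, 0 ≤ batteryLevel (fun i => (ρ i).2) (Emax : ℤ) n + (ρ n).2) :
    ∀ n, (seqPrefix ρ n).foldl (updB Emax) (some 0) ≠ none := by
  have key : ∀ n, ∃ e : Fin (Emax + 1),
      (seqPrefix ρ n).foldl (updB Emax) (some 0) = some e ∧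
      (e.val : ℤ) = batteryLevel (fun i => (ρ i).2) (Emax : ℤ) n := by
    intro n
    induction n with
    | zero => exact ⟨0, by simp [seqPrefix], by simp [batteryLevel]⟩
    | succ n ih =>
      obtain ⟨e, he, hev⟩ := ih
      have hn := h n
      have hBsucc : batteryLevel (fun i => (ρ i).2) (Emax : ℤ) (n + 1) =
          min (batteryLevel (fun i => (ρ i).2) (Emax : ℤ) n + (ρ n).2) (Emax : ℤ) := rfl
      have hcond : ¬((e.val : ℤ) + (ρ n).2 < 0) := by omega
      refine ⟨⟨(min ((e.val : ℤ) + (ρ n).2) (Emax : ℤ)).toNat, by omega⟩, ?_, ?_⟩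
      · rw [seqPrefix_succ, List.foldl_append, he]
        simp only [List.foldl_cons, List.foldl_nil, updB]
        rw [dif_neg hcond]
      · show (((min ((e.val : ℤ) + (ρ n).2) (Emax : ℤ)).toNat : ℕ) : ℤ) = _
        rw [hBsucc]
        omega
  intro n
  obtain ⟨e, he, -⟩ := key n
  rw [he]
  exact Option.some_ne_none e

lemma battW_iff (Emax : ℕ) (ρ : ℕ → ℕ × ℤ) :
    ρ ∈ battW Emax ↔
      (ParityCond ρ ∧ ∀ n, (seqPrefix ρ n).foldl (updB Emax) (some 0) ≠ none) := by
  constructor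
  · rintro ⟨hp, he⟩
    exact ⟨hp, batt_alive Emax ρ he⟩
  · rintro ⟨hp, ha⟩
    refine ⟨hp, fun n => ?_⟩
    cases hm : (seqPrefix ρ (n + 1)).foldl (updB Emax) (some 0) with
    | none => exact absurd hm (ha (n + 1))
    | some e =>
      exact (batt_foldl Emax ρ (n + 1) e hm).2 n (by omega)

end Red

/-- Corollary 17: battery-like and spill-over-like energy parity games
are determined via strategies using at most `E_max + 2` memory states. -/
theorem stmt18 {V : Type} [Fintype V] (O : Arena V (ℕ × ℤ)) (hwf : O.WF) (Emax : ℕ) :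
    ∀ v0 ∈ O.vertices,
      ((∃ σ1, O.Valid1 σ1 ∧ Arena.IsFMSize O.V1 σ1 (Emax + 2) ∧
          O.Winning1 (spillW Emax) σ1 [] v0) ∨
        (∃ σ2, O.Valid2 σ2 ∧ Arena.IsFMSize O.V2 σ2 (Emax + 2) ∧
          O.Winning2 (spillW Emax) σ2 [] v0)) ∧
      ((∃ σ1, O.Valid1 σ1 ∧ Arena.IsFMSize O.V1 σ1 (Emax + 2) ∧
          O.Winning1 (battW Emax) σ1 [] v0) ∨
        (∃ σ2, O.Valid2 σ2 ∧ Arena.IsFMSize O.V2 σ2 (Emax + 2) ∧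
          O.Winning2 (battW Emax) σ2 [] v0)) := by
  intro v0 hv0
  constructor
  · exact Red.redMain O hwf Emax (Red.updS Emax) (fun c => rfl) (spillW Emax)
      (Red.spillW_iff Emax) v0 hv0
  · exact Red.redMain O hwf Emax (Red.updB Emax) (fun c => rfl) (battW Emax)
      (Red.battW_iff Emax) v0 hv0
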